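/- Let {E_i}_{i=1}^n be a POVM on ℂ^d with every effect nonzero, and let r be the dimension of the real linear span of the set {√E_1, …, √E_n} inside the real vector space of Hermitian d×d matrices. If d ≤ r and r ≥ 2, then the orthogonality satisfies O = Σ_{i,j=1}^n (tr(√E_i √E_j))² − 2d + n ≥ (r−d)²/(r−1) + n − r. -/

import Mathlib

/-!
The Gram matrix `G i j = Re tr (√E_i √E_j)` is real symmetric with trace `∑ tr E_i = d`,
rank at most `r`, and `∑ G_ij² = ∑ μ_k²` over its eigenvalues `μ`.
Its largest eigenvalue is at least `1`: for `t_i = tr √E_i` and `T = ∑ t_i √E_i`,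
Cauchy–Schwarz gives `(∑ t_i²)² = (tr T)² ≤ d tr T² = d ⟪t, G t⟫`, while
`∑ t_i² ≥ ∑ tr E_i = d`. With one eigenvalue `a ≥ 1` and at most `r - 1` further nonzero ones
summing to `d - a`, Cauchy–Schwarz again gives `∑ μ² ≥ a² + (d - a)² / (r - 1)`, and since
`d ≤ r` this is at least `1 + (d - 1)² / (r - 1)`, which is the claimed bound rearranged.
-/

open Matrix BigOperators
open scoped ComplexOrder
open scoped MatrixOrder

namespace Matrix.PosSemidef

/-- The positive semidefinite square root (definition as in the older Mathlib). -/
noncomputable def sqrt {R' : Type*} [RCLike R'] {n : Type*} [Fintype n] [DecidableEq n]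
    {A : Matrix n n R'} (hA : PosSemidef A) : Matrix n n R' :=
  hA.1.eigenvectorUnitary.1 * diagonal ((↑) ∘ (√·) ∘ hA.1.eigenvalues) *
  (star hA.1.eigenvectorUnitary : Matrix n n R')

variable {𝕜 : Type*} [RCLike 𝕜] {n : Type*} [Fintype n] [DecidableEq n] {A : Matrix n n 𝕜}

lemma sqrt_eq_cfcSqrt (hA : A.PosSemidef) : hA.sqrt = CFC.sqrt A := by
  rw [CFC.sqrt_eq_real_sqrt A hA.nonneg, cfcₙ_eq_cfc, hA.1.cfc_eq, IsHermitian.cfc,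
    Unitary.conjStarAlgAut_apply]
  rfl

lemma posSemidef_sqrt (hA : A.PosSemidef) : hA.sqrt.PosSemidef :=
  hA.sqrt_eq_cfcSqrt ▸ (CFC.sqrt_nonneg A).posSemidef

lemma sqrt_mul_self (hA : A.PosSemidef) : hA.sqrt * hA.sqrt = A := by
  rw [hA.sqrt_eq_cfcSqrt, CFC.sqrt_mul_sqrt_self A hA.nonneg]

end Matrix.PosSemidef

namespace Matrix

variable {𝕜 : Type*} [RCLike 𝕜]

section Eigenvalues

variable {n : Type*} [Fintype n] [DecidableEq n] {A : Matrix n n 𝕜}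

namespace IsHermitian

lemma trace_mul_self_eq_sum_sq_eigenvalues (hA : A.IsHermitian) :
    (A * A).trace = ∑ i, (hA.eigenvalues i : 𝕜) ^ 2 := by
  have hsq : A * A = cfc (fun x : ℝ => x ^ 2) A := by rw [cfc_pow_id A 2, sq]
  rw [hsq, hA.cfc_eq, IsHermitian.cfc, Unitary.conjStarAlgAut_apply, trace_mul_cycle,
    Unitary.coe_star_mul_self, Matrix.one_mul, trace_diagonal]
  simp

lemma re_trace_mul_self (hA : A.IsHermitian) :
    RCLike.re (A * A).trace = ∑ i, hA.eigenvalues i ^ 2 := by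
  simp_rw [hA.trace_mul_self_eq_sum_sq_eigenvalues, map_sum, ← RCLike.ofReal_pow,
    RCLike.ofReal_re]

lemma re_trace (hA : A.IsHermitian) : RCLike.re A.trace = ∑ i, hA.eigenvalues i := by
  simp [hA.trace_eq_sum_eigenvalues]

lemma sq_re_trace_le_card_mul (hA : A.IsHermitian) :
    RCLike.re A.trace ^ 2 ≤ Fintype.card n * RCLike.re (A * A).trace := by
  rw [hA.re_trace, hA.re_trace_mul_self]
  exact sq_sum_le_card_mul_sum_sq

lemma sum_sq_apply_eq_sum_sq_eigenvalues {G : Matrix n n ℝ} (hG : G.IsHermitian) :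
    ∑ i, ∑ j, G i j ^ 2 = ∑ i, hG.eigenvalues i ^ 2 := by
  rw [← hG.re_trace_mul_self]
  simp only [trace, diag, mul_apply, RCLike.re_to_real, sq]
  exact Finset.sum_congr rfl fun i _ => Finset.sum_congr rfl fun j _ => by
    rw [← hG.apply j i, star_trivial]

lemma exists_le_eigenvalues_of_le_dotProduct (hA : A.IsHermitian) {x : n → 𝕜} (hx : x ≠ 0)
    {c : ℝ} (h : c * RCLike.re (star x ⬝ᵥ x) ≤ RCLike.re (star x ⬝ᵥ A *ᵥ x)) :
    ∃ i, c ≤ hA.eigenvalues i := by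
  obtain ⟨j, -⟩ := Function.ne_iff.mp hx
  obtain ⟨i, -, hi⟩ := Finset.univ.exists_max_image hA.eigenvalues ⟨j, Finset.mem_univ j⟩
  refine ⟨i, ?_⟩
  have hle : A ≤ algebraMap ℝ _ (hA.eigenvalues i) := by
    refine le_algebraMap_of_spectrum_le (fun y hy => ?_) hA.isSelfAdjoint
    obtain ⟨k, rfl⟩ := hA.spectrum_real_eq_range_eigenvalues ▸ hy
    exact hi k (Finset.mem_univ k)
  have hgap := (le_iff.mp hle).re_dotProduct_nonneg x
  rw [Algebra.algebraMap_eq_smul_one, sub_mulVec, smul_mulVec, one_mulVec, dotProduct_sub,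
    dotProduct_smul, map_sub, RCLike.real_smul_eq_coe_mul, RCLike.re_ofReal_mul] at hgap
  have hx' : 0 < RCLike.re (star x ⬝ᵥ x) :=
    (RCLike.pos_iff.mp (dotProduct_star_self_pos_iff.mpr hx)).1
  nlinarith

end IsHermitian

lemma PosSemidef.re_trace_mul_self_le (hA : A.PosSemidef) :
    RCLike.re (A * A).trace ≤ RCLike.re A.trace ^ 2 := by
  rw [hA.1.re_trace, hA.1.re_trace_mul_self]
  exact Finset.sum_sq_le_sq_sum_of_nonneg fun i _ => hA.eigenvalues_nonneg i

end Eigenvalues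

lemma isHermitian_sum_smul {ι m : Type*} [Fintype ι] {S : ι → Matrix m m 𝕜}
    (hS : ∀ i, (S i).IsHermitian) (x : ι → ℝ) : (∑ i, x i • S i).IsHermitian :=
  isSelfAdjoint_sum _ fun i _ => (IsSelfAdjoint.all (x i)).smul (hS i).isSelfAdjoint

section TraceGram

variable {m ι : Type*} [Fintype m]

def traceGram (S : ι → Matrix m m 𝕜) : Matrix ι ι ℝ :=
  of fun i j => RCLike.re (S i * S j).trace

@[simp]
lemma traceGram_apply (S : ι → Matrix m m 𝕜) (i j : ι) :
    traceGram S i j = RCLike.re (S i * S j).trace := rfl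

lemma isHermitian_traceGram (S : ι → Matrix m m 𝕜) : (traceGram S).IsHermitian := by
  ext i j
  simp [trace_mul_comm (S i)]

variable [Fintype ι]

lemma traceGram_mulVec (S : ι → Matrix m m 𝕜) (x : ι → ℝ) :
    traceGram S *ᵥ x = fun i => RCLike.re (S i * ∑ j, x j • S j).trace := by
  ext i
  simp [mulVec, dotProduct, Finset.mul_sum, trace_sum, mul_comm, RCLike.smul_re]

lemma dotProduct_traceGram_mulVec (S : ι → Matrix m m 𝕜) (x : ι → ℝ) :
    x ⬝ᵥ traceGram S *ᵥ x = RCLike.re ((∑ i, x i • S i) * ∑ j, x j • S j).trace := by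
  simp [traceGram_mulVec, dotProduct, Finset.sum_mul, trace_sum, RCLike.smul_re]

lemma trace_traceGram (S : ι → Matrix m m 𝕜) :
    (traceGram S).trace = ∑ i, RCLike.re (S i * S i).trace := by
  simp [trace]

lemma trace_traceGram_eq_card [DecidableEq m] {S : ι → Matrix m m 𝕜}
    (hS1 : ∑ i, S i * S i = 1) : (traceGram S).trace = Fintype.card m := by
  rw [trace_traceGram, ← map_sum, ← trace_sum, hS1, trace_one]
  simp

lemma rank_traceGram_le (S : ι → Matrix m m 𝕜) :
    (traceGram S).rank ≤ Module.finrank ℝ (Submodule.span ℝ (Set.range S)) := by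
  let φ : Matrix m m 𝕜 →ₗ[ℝ] ι → ℝ :=
    { toFun := fun A i => RCLike.re (S i * A).trace
      map_add' := fun A B => by ext; simp [Matrix.mul_add]
      map_smul' := fun c A => by ext; simp [RCLike.smul_re] }
  have hfac : (traceGram S).mulVecLin = φ ∘ₗ Fintype.linearCombination ℝ S := by
    ext1 x
    simp [φ, traceGram_mulVec, Fintype.linearCombination_apply]
  rw [rank, hfac, LinearMap.range_comp, Fintype.range_linearCombination]
  exact Submodule.finrank_map_le φ _

lemma exists_one_le_eigenvalues_traceGram [DecidableEq ι] [DecidableEq m] [Nonempty m]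
    {S : ι → Matrix m m 𝕜} (hS : ∀ i, (S i).PosSemidef) (hS1 : ∑ i, S i * S i = 1) :
    ∃ k, 1 ≤ (isHermitian_traceGram S).eigenvalues k := by
  set t : ι → ℝ := fun i => RCLike.re (S i).trace
  have hT : (∑ i, t i • S i).IsHermitian := isHermitian_sum_smul (fun i => (hS i).1) t
  have hm : (0 : ℝ) < Fintype.card m := by exact_mod_cast Fintype.card_pos
  have htT : RCLike.re (∑ i, t i • S i).trace = ∑ i, t i ^ 2 := by
    simp [t, trace_sum, RCLike.smul_re, sq]
  have hnorm : (Fintype.card m : ℝ) ≤ ∑ i, t i ^ 2 := by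
    rw [← trace_traceGram_eq_card hS1, trace_traceGram]
    exact Finset.sum_le_sum fun i _ => (hS i).re_trace_mul_self_le
  have hray : (∑ i, t i ^ 2) ^ 2 ≤ Fintype.card m * (t ⬝ᵥ traceGram S *ᵥ t) := by
    rw [dotProduct_traceGram_mulVec, ← htT]
    exact hT.sq_re_trace_le_card_mul
  have ht : t ≠ 0 := by
    rintro ht
    simp [ht] at hnorm
  refine (isHermitian_traceGram S).exists_le_eigenvalues_of_le_dotProduct ht ?_
  have htt : t ⬝ᵥ t = ∑ i, t i ^ 2 := by simp [dotProduct, sq]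
  simp only [star_trivial, RCLike.re_to_real, htt]
  nlinarith

end TraceGram

end Matrix

lemma one_add_sq_div_le_sq_add_sq_div {a d r : ℝ} (ha : 1 ≤ a) (hdr : d ≤ r) (hr : 1 < r) :
    1 + (d - 1) ^ 2 / (r - 1) ≤ a ^ 2 + (d - a) ^ 2 / (r - 1) := by
  have hr1 : r - 1 ≠ 0 := (sub_pos.mpr hr).ne'
  have hgap : a ^ 2 + (d - a) ^ 2 / (r - 1) - (1 + (d - 1) ^ 2 / (r - 1))
      = (a - 1) * (r * (a + 1) - 2 * d) / (r - 1) := by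
    field_simp
    ring
  have : 0 ≤ (a - 1) * (r * (a + 1) - 2 * d) / (r - 1) :=
    div_nonneg (mul_nonneg (by linarith) (by nlinarith)) (by linarith)
  linarith

section

open Finset

lemma one_add_sq_div_le_sum_sq {ι : Type*} [Fintype ι] {μ : ι → ℝ} {r : ℕ} (hr : 2 ≤ r)
    (hsupp : #{i | μ i ≠ 0} ≤ r) (hsum : ∑ i, μ i ≤ r) {k : ι} (hk : 1 ≤ μ k) :
    1 + (∑ i, μ i - 1) ^ 2 / (r - 1) ≤ ∑ i, μ i ^ 2 := by
  classical
  have hr' : (1 : ℝ) < r := by exact_mod_cast hr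
  set s : Finset ι := {i | μ i ≠ 0}
  have hks : k ∈ s := mem_filter.mpr ⟨mem_univ k, (zero_lt_one.trans_le hk).ne'⟩
  have hsum_s : ∑ i, μ i = μ k + ∑ i ∈ s.erase k, μ i := by
    rw [add_sum_erase s μ hks, sum_filter_ne_zero]
  have hsq_s : ∑ i, μ i ^ 2 = μ k ^ 2 + ∑ i ∈ s.erase k, μ i ^ 2 := by
    rw [add_sum_erase s (μ · ^ 2) hks]
    exact (sum_filter_of_ne fun i _ h => by simpa using h).symm
  have hcard : ((s.erase k).card : ℝ) ≤ r - 1 := by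
    have : ((s.erase k).card : ℝ) + 1 ≤ r := by exact_mod_cast card_erase_add_one hks ▸ hsupp
    linarith
  have hcs : (∑ i, μ i - μ k) ^ 2 / (r - 1) ≤ ∑ i ∈ s.erase k, μ i ^ 2 := by
    rw [div_le_iff₀ (by linarith), hsum_s, add_sub_cancel_left]
    calc (∑ i ∈ s.erase k, μ i) ^ 2 ≤ (s.erase k).card * ∑ i ∈ s.erase k, μ i ^ 2 :=
          sq_sum_le_card_mul_sum_sq
      _ ≤ _ := by
          rw [mul_comm]
          exact mul_le_mul_of_nonneg_left hcard (sum_nonneg fun i _ => sq_nonneg _)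
  linarith [one_add_sq_div_le_sq_add_sq_div hk hsum hr']

lemma Matrix.IsHermitian.one_add_sq_div_le_sum_sq_apply {ι : Type*} [Fintype ι] [DecidableEq ι]
    {G : Matrix ι ι ℝ} (hG : G.IsHermitian) {r : ℕ} (hr : 2 ≤ r) (hrank : G.rank ≤ r)
    (htr : G.trace ≤ r) {k : ι} (hk : 1 ≤ hG.eigenvalues k) :
    1 + (G.trace - 1) ^ 2 / (r - 1) ≤ ∑ i, ∑ j, G i j ^ 2 := by
  have hsupp : #{i | hG.eigenvalues i ≠ 0} ≤ r := by
    rwa [hG.rank_eq_card_non_zero_eigs, Fintype.card_subtype] at hrank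
  have htr_eq : G.trace = ∑ i, hG.eigenvalues i := by simpa using hG.re_trace
  rw [hG.sum_sq_apply_eq_sum_sq_eigenvalues, htr_eq]
  exact one_add_sq_div_le_sum_sq hr hsupp (htr_eq ▸ htr) hk

end

theorem orthogonality_lower_bound_span_rank_general
    (d n : ℕ) (E : Fin n → Matrix (Fin d) (Fin d) ℂ)
    (hE : ∀ i, (E i).PosSemidef)
    (hsum : ∑ i, E i = 1)
    (r : ℕ)
    (hr : r = Module.finrank ℝ
      (Submodule.span ℝ (Set.range fun i => (hE i).sqrt)))
    (hdr : d ≤ r) (hr2 : 2 ≤ r) :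
    ((r : ℝ) - d) ^ 2 / ((r : ℝ) - 1) + (n : ℝ) - (r : ℝ)
      ≤ ∑ i, ∑ j, (((hE i).sqrt * (hE j).sqrt).trace.re) ^ 2 - 2 * (d : ℝ) + (n : ℝ) := by
  set S := fun i => (hE i).sqrt
  have : Nonempty (Fin d) := by
    refine Fin.pos_iff_nonempty.mp (Nat.pos_of_ne_zero fun hd0 => ?_)
    subst hd0
    have := hr ▸ Submodule.finrank_le (Submodule.span ℝ (Set.range S))
    rw [Module.finrank_zero_of_subsingleton] at this
    omega
  have hSS : ∑ i, S i * S i = 1 := by simpa only [S, PosSemidef.sqrt_mul_self] using hsum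
  have htr : (traceGram S).trace = d := by simpa using trace_traceGram_eq_card hSS
  obtain ⟨k, hk⟩ := exists_one_le_eigenvalues_traceGram (fun i => (hE i).posSemidef_sqrt) hSS
  have hbound := (isHermitian_traceGram S).one_add_sq_div_le_sum_sq_apply hr2
    (hr ▸ rank_traceGram_le S) (by rw [htr]; exact_mod_cast hdr) hk
  simp only [htr, traceGram_apply, RCLike.re_to_complex] at hbound
  have hr1 : (r : ℝ) - 1 ≠ 0 := by
    have : (2 : ℝ) ≤ r := by exact_mod_cast hr2
    linarith
  have hrearrange :
      ((r : ℝ) - d) ^ 2 / (r - 1) - r + 2 * d = 1 + ((d : ℝ) - 1) ^ 2 / (r - 1) := by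
    field_simp
    ring
  linarith

/-- For a POVM `{E_i}` on `ℂ^d` with all effects nonzero, if `r` is the
dimension of the real linear span of `{√E_1, …, √E_n}` (inside the Hermitian matrices),
`d ≤ r`, and `r ≥ 2`, then the orthogonality satisfies
`O = Σ_{i,j} (tr(√E_i √E_j))² − 2d + n ≥ (r−d)²/(r−1) + n − r`. -/
theorem orthogonality_lower_bound_span_rank
    (d n : ℕ) (E : Fin n → Matrix (Fin d) (Fin d) ℂ)
    (hE : ∀ i, (E i).PosSemidef)
    (hsum : ∑ i, E i = 1)
    (hne : ∀ i, E i ≠ 0)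
    (r : ℕ)
    (hr : r = Module.finrank ℝ
      (Submodule.span ℝ (Set.range fun i => (hE i).sqrt)))
    (hdr : d ≤ r) (hr2 : 2 ≤ r) :
    ((r : ℝ) - d) ^ 2 / ((r : ℝ) - 1) + (n : ℝ) - (r : ℝ)
      ≤ ∑ i, ∑ j, (((hE i).sqrt * (hE j).sqrt).trace.re) ^ 2 - 2 * (d : ℝ) + (n : ℝ) :=
  orthogonality_lower_bound_span_rank_general d n E hE hsum r hr hdr hr2
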